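/- For any input list I of items with sizes in (0,1] and any arrival order, the number of bins used by Best-Fit is at most the number of bins used by Modified Best-Fit on the same list in the same order: BF(I) ≤ MBF(I). -/

import Mathlib

/-- One step of Best-Fit: the item `x` is placed in a fullest feasible bin, and a new
bin is opened iff no existing bin can accommodate it. -/
def BFStep (bins : List (List ℝ)) (x : ℝ) (bins' : List (List ℝ)) : Prop :=
  (∃ i : ℕ, ∃ h : i < bins.length,
      (bins[i]'h).sum + x ≤ 1 ∧
      (∀ j : ℕ, ∀ hj : j < bins.length,
        (bins[j]'hj).sum + x ≤ 1 → (bins[j]'hj).sum ≤ (bins[i]'h).sum) ∧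
      bins' = bins.set i (x :: (bins[i]'h)))
  ∨ ((∀ b ∈ bins, 1 < b.sum + x) ∧ bins' = bins ++ [[x]])

/-- `BFFrom bins I final`: Best-Fit starting from `bins` processes `I` and ends with `final`. -/
inductive BFFrom : List (List ℝ) → List ℝ → List (List ℝ) → Prop
  | nil (bins : List (List ℝ)) : BFFrom bins [] bins
  | cons {bins bins' final : List (List ℝ)} {x : ℝ} {xs : List ℝ} :
      BFStep bins x bins' → BFFrom bins' xs final → BFFrom bins (x :: xs) final

/-- One step of Modified Best-Fit: bins carry an open/closed flag; the item `x` goes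
into a fullest open feasible bin (or a new bin), and the receiving bin stays open
iff `x > 1/2`. -/
def MBFStep (bins : List (List ℝ × Bool)) (x : ℝ) (bins' : List (List ℝ × Bool)) : Prop :=
  ∃ st : Bool, (st = true ↔ 1 / 2 < x) ∧
    ((∃ i : ℕ, ∃ h : i < bins.length,
        (bins[i]'h).2 = true ∧ (bins[i]'h).1.sum + x ≤ 1 ∧
        (∀ j : ℕ, ∀ hj : j < bins.length,
          (bins[j]'hj).2 = true → (bins[j]'hj).1.sum + x ≤ 1 →
            (bins[j]'hj).1.sum ≤ (bins[i]'h).1.sum) ∧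
        bins' = bins.set i (x :: (bins[i]'h).1, st))
     ∨ ((∀ b ∈ bins, b.2 = true → 1 < b.1.sum + x) ∧ bins' = bins ++ [([x], st)]))

/-- `MBFFrom bins I final`: Modified Best-Fit starting from `bins` processes `I` and
ends with `final`. -/
inductive MBFFrom : List (List ℝ × Bool) → List ℝ → List (List ℝ × Bool) → Prop
  | nil (bins : List (List ℝ × Bool)) : MBFFrom bins [] bins
  | cons {bins bins' final : List (List ℝ × Bool)} {x : ℝ} {xs : List ℝ} :
      MBFStep bins x bins' → MBFFrom bins' xs final → MBFFrom bins (x :: xs) final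

/-!
Only the multisets of bin levels matter: `S` for the Best-Fit bins, `O` for the open bins of
Modified Best-Fit. Every open MBF bin is filled beyond `1/2`, because an item that fits into it
is at most `1/2` and closes it. The invariant is

  `#BF bins ≤ #closed MBF bins + |O ∩ S|`,

i.e. every BF bin without an open MBF partner of the same level is paid for by a closed MBF bin.
If MBF puts an item into an open bin of level `a` while BF puts it into a bin of level `s`, the two
best-fit rules force `a = s` as soon as `a` occurs in `S` and `s` in `O`, so at most one matched
pair is lost, and the newly closed bin pays for it. If instead BF opens a new bin, no BF bin has
level `a`, since it would have accommodated the item.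
-/

namespace List

theorem getElem_cons_set_perm {α : Type*} {l : List α} {i : ℕ} (h : i < l.length) (v : α) :
    l[i] :: l.set i v ~ v :: l :=
  ((set_perm_cons_eraseIdx h v).cons _).trans <|
    (Perm.swap v l[i] _).trans ((getElem_cons_eraseIdx_perm h).cons v)

end List

namespace Multiset

theorem cons_coe_set {α : Type*} {l : List α} {i : ℕ} (h : i < l.length) (v : α) :
    l[i] ::ₘ (l.set i v : Multiset α) = v ::ₘ (l : Multiset α) :=
  coe_eq_coe.2 (List.getElem_cons_set_perm h v)

theorem coe_append_singleton {α : Type*} (l : List α) (a : α) :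
    ((l ++ [a] : List α) : Multiset α) = a ::ₘ (l : Multiset α) :=
  coe_eq_coe.2 (List.perm_append_singleton a l)

variable {α : Type*} [DecidableEq α] {s s' t t' : Multiset α} {a b : α}

theorem card_inter_le_card_inter (hs : s ≤ s') (ht : t ≤ t') : card (s ∩ t) ≤ card (s' ∩ t') :=
  card_le_card (inf_le_inf hs ht)

theorem inter_erase_of_notMem (hb : b ∉ s) : s ∩ t.erase b = s ∩ t :=
  le_antisymm (inf_le_inf le_rfl (erase_le b t)) <|
    le_inter inter_le_left <|
      (erase_of_notMem fun h => hb (mem_inter.1 h).1).symm.le.trans (erase_le_erase b inter_le_right)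

theorem erase_inter_of_notMem (ha : a ∉ t) : s.erase a ∩ t = s ∩ t := by
  rw [inter_comm, inter_erase_of_notMem ha, inter_comm]

theorem card_inter_le_card_inter_add_one_of_le_cons (hs : s ≤ a ::ₘ s') (ht : t ≤ a ::ₘ t') :
    card (s ∩ t) ≤ card (s' ∩ t') + 1 := by
  simpa only [← cons_inter_distrib, card_cons] using card_inter_le_card_inter hs ht

theorem card_inter_le_card_erase_inter_erase_add_one (h : a ∈ t → b ∈ s → a = b) :
    card (s ∩ t) ≤ card (s.erase a ∩ t.erase b) + 1 := by
  obtain rfl | hab := eq_or_ne a b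
  · exact card_inter_le_card_inter_add_one_of_le_cons (le_cons_erase s a) (le_cons_erase t a)
  · by_cases ha : a ∈ t
    · have hb : b ∉ s := fun hb => hab (h ha hb)
      rw [← inter_erase_of_notMem hb]
      exact card_inter_le_card_inter_add_one_of_le_cons (le_cons_erase s a) (le_cons_self _ a)
    · rw [← erase_inter_of_notMem ha]
      exact card_inter_le_card_inter_add_one_of_le_cons (le_cons_self _ b) (le_cons_erase t b)

end Multiset

open Multiset

def binLevels (B : List (List ℝ)) : Multiset ℝ :=
  (B : Multiset (List ℝ)).map List.sum

def openLevels (M : Multiset (List ℝ × Bool)) : Multiset ℝ :=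
  (M.filter (·.2 = true)).map (·.1.sum)

def closedCount (M : Multiset (List ℝ × Bool)) : ℕ :=
  M.countP (·.2 = false)

theorem openLevels_cons (b : List ℝ × Bool) (M : Multiset (List ℝ × Bool)) :
    openLevels (b ::ₘ M) = if b.2 then b.1.sum ::ₘ openLevels M else openLevels M := by
  cases h : b.2 <;> simp [openLevels, h]

theorem closedCount_cons (b : List ℝ × Bool) (M : Multiset (List ℝ × Bool)) :
    closedCount (b ::ₘ M) = closedCount M + if b.2 then 0 else 1 := by
  cases h : b.2 <;> simp [closedCount, h]

theorem card_binLevels (B : List (List ℝ)) : card (binLevels B) = B.length := by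
  simp [binLevels]

theorem card_eq_closedCount_add_card_openLevels (M : Multiset (List ℝ × Bool)) :
    card M = closedCount M + card (openLevels M) := by
  rw [closedCount, openLevels, card_map, ← countP_eq_card_filter, add_comm,
    card_eq_countP_add_countP (·.2 = true)]
  simp only [Bool.not_eq_true]

theorem BFStep.binLevels_eq {B B' : List (List ℝ)} {x : ℝ} (h : BFStep B x B') :
    (∀ t ∈ binLevels B, 1 < t + x) ∧ binLevels B' = x ::ₘ binLevels B ∨
      ∃ s ∈ binLevels B, s + x ≤ 1 ∧ (∀ t ∈ binLevels B, t + x ≤ 1 → t ≤ s) ∧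
        binLevels B' = (s + x) ::ₘ (binLevels B).erase s := by
  rcases h with ⟨i, hi, hfit, hbest, rfl⟩ | ⟨hnofit, rfl⟩
  · have hmem : B[i].sum ∈ binLevels B := mem_map_of_mem _ (mem_coe.2 (List.getElem_mem hi))
    refine Or.inr ⟨B[i].sum, hmem, hfit, ?_, ?_⟩
    · intro t ht
      obtain ⟨b, hb, rfl⟩ := mem_map.1 ht
      obtain ⟨j, hj, rfl⟩ := List.getElem_of_mem (mem_coe.1 hb)
      exact hbest j hj
    · have hperm := congrArg (map List.sum) (cons_coe_set hi (x :: B[i]))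
      simp only [map_cons, List.sum_cons] at hperm
      unfold binLevels at hmem ⊢
      rw [← erase_cons_head B[i].sum (map List.sum _), hperm, erase_cons_tail_of_mem hmem, add_comm]
  · refine Or.inl ⟨fun t ht => ?_, ?_⟩
    · obtain ⟨b, hb, rfl⟩ := mem_map.1 ht
      exact hnofit b (mem_coe.1 hb)
    · rw [binLevels, coe_append_singleton, map_cons, List.sum_singleton, binLevels]

theorem MBFStep.levels_eq {M M' : List (List ℝ × Bool)} {x : ℝ}
    (hopen : ∀ a ∈ openLevels M, 1 / 2 < a) (h : MBFStep M x M') :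
    (1 / 2 < x ∧ closedCount M' = closedCount M ∧ openLevels M' = x ::ₘ openLevels M) ∨
      (closedCount M' = closedCount M + 1 ∧ openLevels M' = openLevels M) ∨
      ∃ a ∈ openLevels M, a + x ≤ 1 ∧ (∀ t ∈ openLevels M, t + x ≤ 1 → t ≤ a) ∧
        closedCount M' = closedCount M + 1 ∧ openLevels M' = (openLevels M).erase a := by
  obtain ⟨st, hst, ⟨i, hi, hopen_i, hfit, hbest, rfl⟩ | ⟨-, rfl⟩⟩ := h
  · have hmem : M[i].1.sum ∈ openLevels M :=
      mem_map_of_mem _ (mem_filter_of_mem (mem_coe.2 (List.getElem_mem hi)) hopen_i)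
    obtain rfl : st = false := by
      have := hopen _ hmem
      cases st
      · rfl
      · linarith [hst.1 rfl]
    have hperm := cons_coe_set hi (x :: M[i].1, false)
    refine Or.inr (Or.inr ⟨_, hmem, hfit, ?_, ?_, ?_⟩)
    · intro t ht
      obtain ⟨b, hb, rfl⟩ := mem_map.1 ht
      obtain ⟨hb, hbo⟩ := mem_filter.1 hb
      obtain ⟨j, hj, rfl⟩ := List.getElem_of_mem (mem_coe.1 hb)
      exact hbest j hj hbo
    · have := congrArg closedCount hperm
      rw [closedCount_cons, closedCount_cons] at this
      simpa [hopen_i] using this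
    · have := congrArg openLevels hperm
      simp only [openLevels_cons, hopen_i, if_true, Bool.false_eq_true, if_false] at this
      rw [← this, erase_cons_head]
  · rw [coe_append_singleton, openLevels_cons, closedCount_cons]
    cases st
    · simp
    · exact Or.inl ⟨hst.1 rfl, by simp, by simp⟩

structure DominationInvariant (B : List (List ℝ)) (M : List (List ℝ × Bool)) : Prop where
  half_lt_of_mem_openLevels : ∀ a ∈ openLevels M, 1 / 2 < a
  card_binLevels_le : card (binLevels B) ≤ closedCount M + card (openLevels M ∩ binLevels B)

theorem DominationInvariant.step {B B' : List (List ℝ)} {M M' : List (List ℝ × Bool)} {x : ℝ}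
    (hinv : DominationInvariant B M) (hB : BFStep B x B') (hM : MBFStep M x M') :
    DominationInvariant B' M' := by
  obtain ⟨hhalf, hcard⟩ := hinv
  have hBS := hB.binLevels_eq
  have hMO := hM.levels_eq hhalf
  generalize binLevels B = S at hcard hBS
  generalize openLevels M = O at hhalf hcard hMO
  generalize closedCount M = c at hcard hMO
  rcases hMO with ⟨hx, hc, hO⟩ | ⟨hc, hO⟩ | ⟨a, ha, hafit, habest, hc, hO⟩
  · refine ⟨hO ▸ forall_mem_cons.2 ⟨hx, hhalf⟩, ?_⟩
    rw [hc, hO]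
    rcases hBS with ⟨-, hS⟩ | ⟨s, hs, hsfit, -, hS⟩ <;> rw [hS]
    · rw [← cons_inter_distrib, card_cons, card_cons]
      omega
    · have hsO : s ∉ O := fun h => by linarith [hhalf s h]
      have hmono := card_inter_le_card_inter (le_cons_self O x) (le_cons_self (S.erase s) (s + x))
      rw [inter_erase_of_notMem hsO] at hmono
      rw [card_cons, card_erase_add_one hs]
      omega
  · refine ⟨hO ▸ hhalf, ?_⟩
    rw [hc, hO]
    rcases hBS with ⟨-, hS⟩ | ⟨s, hs, -, -, hS⟩ <;> rw [hS]
    · have hmono := card_inter_le_card_inter (le_refl O) (le_cons_self S x)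
      rw [card_cons]
      omega
    · have h₁ := card_inter_le_card_erase_inter_erase_add_one (s := O) (t := S)
        (fun _ _ => rfl : s ∈ S → s ∈ O → s = s)
      have h₂ := card_inter_le_card_inter (erase_le s O) (le_cons_self (S.erase s) (s + x))
      rw [card_cons, card_erase_add_one hs]
      omega
  · refine ⟨hO ▸ fun t ht => hhalf t (mem_of_mem_erase ht), ?_⟩
    rw [hc, hO]
    rcases hBS with ⟨hnofit, hS⟩ | ⟨s, hs, hsfit, hsbest, hS⟩ <;> rw [hS]
    · have haS : a ∉ S := fun h => by linarith [hnofit a h]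
      have hmono := card_inter_le_card_inter (le_refl (O.erase a)) (le_cons_self S x)
      rw [erase_inter_of_notMem haS] at hmono
      rw [card_cons]
      omega
    · have h₁ := card_inter_le_card_erase_inter_erase_add_one (s := O) (t := S)
        fun haS hsO => le_antisymm (hsbest a haS hafit) (habest s hsO hsfit)
      have h₂ := card_inter_le_card_inter (le_refl (O.erase a)) (le_cons_self (S.erase s) (s + x))
      rw [card_cons, card_erase_add_one hs]
      omega

theorem DominationInvariant.of_runs {B B' : List (List ℝ)} {M M' : List (List ℝ × Bool)}
    {I : List ℝ} (hinv : DominationInvariant B M) (hB : BFFrom B I B') (hM : MBFFrom M I M') :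
    DominationInvariant B' M' := by
  induction hB generalizing M with
  | nil => cases hM; exact hinv
  | cons hb _ ih =>
    cases hM with
    | cons hm hM => exact ih (hinv.step hb hm) hM

theorem dominationInvariant_nil : DominationInvariant [] [] :=
  ⟨by simp [openLevels], by simp [binLevels]⟩

theorem bf_le_mbf_general (I : List ℝ)
    (binsBF : List (List ℝ)) (hbf : BFFrom [] I binsBF)
    (binsMBF : List (List ℝ × Bool)) (hmbf : MBFFrom [] I binsMBF) :
    binsBF.length ≤ binsMBF.length := by
  have hinv := dominationInvariant_nil.of_runs hbf hmbf
  calc binsBF.length = card (binLevels binsBF) := (card_binLevels binsBF).symm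
    _ ≤ closedCount binsMBF + card (openLevels binsMBF ∩ binLevels binsBF) :=
      hinv.card_binLevels_le
    _ ≤ closedCount binsMBF + card (openLevels binsMBF) := by
      gcongr
      exact inter_le_left
    _ = binsMBF.length := (card_eq_closedCount_add_card_openLevels binsMBF).symm

/-- Shor's domination result: on any input list (in any order), Best-Fit never uses
more bins than Modified Best-Fit: `BF(I) ≤ MBF(I)`. -/
theorem bf_le_mbf (I : List ℝ) (hI : ∀ x ∈ I, 0 < x ∧ x ≤ 1)
    (binsBF : List (List ℝ)) (hbf : BFFrom [] I binsBF)
    (binsMBF : List (List ℝ × Bool)) (hmbf : MBFFrom [] I binsMBF) :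
    binsBF.length ≤ binsMBF.length :=
  bf_le_mbf_general I binsBF hbf binsMBF hmbf
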